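/- Let $0<\alpha<n$, let $\Omega$ be homogeneous of degree zero, bounded and Lipschitz on $\mathbb{S}^{n-1}$, and let $f\in L^1(\mathbb{R}^n)$ be nonnegative, supported in $B(0,1)$, with $\|f\|_{L^1}=1$; set $f_t(y)=t^{-n}f(y/t)$. Then for every $\rho>0$, $\lim_{t\to 0^+}\Big\|M_{\Omega}^{\alpha}f_t(\cdot)-\frac{|\Omega(\cdot)|}{|\cdot|^{n-\alpha}}\Big\|_{L^{n/(n-\alpha),\infty}(\mathbb{R}^n\setminus B(0,\rho))}=0$. -/

import Mathlib

/-!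
Since `f_t` has unit mass and lives in `B(0, t)`, for `‖x‖ ≥ ρ > t` a ball `B(x, r)` sees `f_t` only
if `r > ‖x‖ - t`, while `B(x, ‖x‖ + 2t)` sees all of it; on that support the Lipschitz bound on the
sphere gives `|Ω(x - y) - Ω(x)| ≤ 2Lt/ρ`. Hence `M f_t(x)` is squeezed between
`(‖x‖ + 2t)^(α-n) (|Ω x| - 2Lt/ρ)` and `(‖x‖ - t)^(α-n) (|Ω x| + 2Lt/ρ)`, so it differs from
`|Ω x| ‖x‖^(α-n)` by at most `ε(t/ρ) ‖x‖^(α-n)` with `ε(s) → 0`. As `‖x‖^(α-n)` has finite weak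
`L^(n/(n-α))` norm, the weak norm of the difference is `O(ε(t/ρ))`.
-/

open MeasureTheory Metric Set ENNReal Filter

noncomputable section

abbrev Eucl (n : ℕ) := EuclideanSpace ℝ (Fin n)

/-- `Ω` is homogeneous of degree zero. -/
def Homog (n : ℕ) (Ω : Eucl n → ℝ) : Prop :=
  ∀ r : ℝ, 0 < r → ∀ x : Eucl n, x ≠ 0 → Ω (r • x) = Ω x

/-- Restricted weak `L^q` quasinorm of an `ℝ≥0∞`-valued function on the set `A`. -/
noncomputable def wnormSet {X : Type*} [MeasurableSpace X] (μ : Measure X) (q : ℝ)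
    (A : Set X) (g : X → ℝ≥0∞) : ℝ≥0∞ :=
  ⨆ l : NNReal, (l : ℝ≥0∞) * (μ {x | x ∈ A ∧ (l : ℝ≥0∞) < g x}) ^ (1 / q)

/-- `∫_{S^{n-1}} |Ω|^q dσ`. -/
noncomputable def sphereLpPow (n : ℕ) (q : ℝ) (Ω : Eucl n → ℝ) : ℝ≥0∞ :=
  ∫⁻ x : Metric.sphere (0 : Eucl n) 1, (‖Ω (x : Eucl n)‖₊ : ℝ≥0∞) ^ q
    ∂((volume : Measure (Eucl n)).toSphere)

/-- `‖Ω‖_{L^q(S^{n-1})}`. -/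
noncomputable def sphereLpNorm (n : ℕ) (q : ℝ) (Ω : Eucl n → ℝ) : ℝ≥0∞ :=
  (sphereLpPow n q Ω) ^ (1 / q)

/-- Rough fractional maximal operator. -/
noncomputable def fracMax (n : ℕ) (α : ℝ) (Ω f : Eucl n → ℝ) (x : Eucl n) : ℝ≥0∞ :=
  ⨆ (r : ℝ) (_ : 0 < r), ENNReal.ofReal (r ^ (α - n)) *
    ∫⁻ y in ball x r, (‖Ω (x - y)‖₊ * ‖f y‖₊ : ℝ≥0∞)

/-- Fractional integral with kernel `|Ω|`, applied to `|f|`. -/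
noncomputable def fracIntAbs (n : ℕ) (α : ℝ) (Ω f : Eucl n → ℝ) (x : Eucl n) : ℝ≥0∞ :=
  ∫⁻ y, ((‖Ω (x - y)‖₊ * ‖f y‖₊ : ℝ≥0∞)) / (‖x - y‖₊ : ℝ≥0∞) ^ ((n : ℝ) - α)

/-- Signed fractional integral. -/
noncomputable def fracInt (n : ℕ) (α : ℝ) (Ω f : Eucl n → ℝ) (x : Eucl n) : ℝ :=
  ∫ y, (Ω (x - y) / ‖x - y‖ ^ ((n : ℝ) - α)) * f y

/-- The `L^1`-normalized dilation `f_t(y) = t^{-n} f(y/t)`. -/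
noncomputable def dil (n : ℕ) (t : ℝ) (f : Eucl n → ℝ) : Eucl n → ℝ :=
  fun y => (t ^ n)⁻¹ * f (t⁻¹ • y)

/-- `|a - b|` in `ℝ≥0∞`. -/
noncomputable def ediff (a b : ℝ≥0∞) : ℝ≥0∞ := (a - b) ⊔ (b - a)

open Topology
open NormedSpace (normalize)

lemma ediff_le_ofReal {a : ℝ≥0∞} {v e : ℝ} (hup : a ≤ ENNReal.ofReal (v + e))
    (hlo : ENNReal.ofReal (v - e) ≤ a) : ediff a (ENNReal.ofReal v) ≤ ENNReal.ofReal e := by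
  refine sup_le (tsub_le_iff_left.2 ?_) (tsub_le_iff_left.2 ?_)
  · exact hup.trans ENNReal.ofReal_add_le
  · calc ENNReal.ofReal v = ENNReal.ofReal (v - e + e) := by rw [sub_add_cancel]
      _ ≤ ENNReal.ofReal (v - e) + ENNReal.ofReal e := ENNReal.ofReal_add_le
      _ ≤ a + ENNReal.ofReal e := by gcongr

lemma norm_normalize_sub_normalize_le {E : Type*} [NormedAddCommGroup E] [NormedSpace ℝ E]
    {x y : E} (hx : x ≠ 0) (hy : y ≠ 0) :
    ‖normalize y - normalize x‖ ≤ 2 * ‖y - x‖ / ‖x‖ := by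
  have hx' : 0 < ‖x‖ := norm_pos_iff.2 hx
  have hy' : 0 < ‖y‖ := norm_pos_iff.2 hy
  have hsplit : normalize y - normalize x = ‖x‖⁻¹ • (y - x) + (‖y‖⁻¹ - ‖x‖⁻¹) • y := by
    simp only [NormedSpace.normalize, smul_sub, sub_smul]; abel
  have hnorm : |‖y‖⁻¹ - ‖x‖⁻¹| * ‖y‖ = |‖x‖ - ‖y‖| / ‖x‖ := by
    rw [inv_sub_inv hy'.ne' hx'.ne', abs_div, abs_of_pos (mul_pos hy' hx')]
    field_simp
  calc ‖normalize y - normalize x‖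
      ≤ ‖x‖⁻¹ * ‖y - x‖ + |‖y‖⁻¹ - ‖x‖⁻¹| * ‖y‖ := by
        rw [hsplit]
        refine (norm_add_le _ _).trans_eq ?_
        rw [norm_smul, norm_smul, Real.norm_eq_abs, Real.norm_eq_abs, abs_of_pos (inv_pos.2 hx')]
    _ ≤ ‖y - x‖ / ‖x‖ + ‖y - x‖ / ‖x‖ := by
        rw [hnorm, inv_mul_eq_div]
        gcongr
        rw [abs_sub_comm]
        exact abs_norm_sub_norm_le y x
    _ = 2 * ‖y - x‖ / ‖x‖ := by ring

lemma normalize_mem_sphere {E : Type*} [NormedAddCommGroup E] [NormedSpace ℝ E] {x : E}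
    (hx : x ≠ 0) : normalize x ∈ sphere (0 : E) 1 := by
  simpa using NormedSpace.norm_normalize_eq_one_iff.2 hx

lemma lt_rpow_inv_of_lt_mul_rpow_neg {l C r p : ℝ} (hl : 0 < l) (hr : 0 ≤ r) (hp : 0 < p)
    (h : l < C * r ^ (-p)) : r < (max C 0 / l) ^ p⁻¹ := by
  have hr' : 0 < r := by
    refine hr.lt_of_ne' fun hr0 => ?_
    rw [hr0, Real.zero_rpow (neg_ne_zero.2 hp.ne'), mul_zero] at h
    exact hl.not_gt h
  rw [Real.lt_rpow_inv_iff_of_pos hr (by positivity) hp, lt_div_iff₀ hl]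
  calc r ^ p * l < r ^ p * (C * r ^ (-p)) := by gcongr
    _ = C := by rw [mul_left_comm, ← Real.rpow_add hr', add_neg_cancel, Real.rpow_zero, mul_one]
    _ ≤ max C 0 := le_max_left C 0

section HaarMeasure

variable {E : Type*} [NormedAddCommGroup E] [NormedSpace ℝ E] [FiniteDimensional ℝ E]
  [MeasurableSpace E] [BorelSpace E] (μ : Measure E) [μ.IsAddHaarMeasure]

lemma lintegral_comp_smul (g : E → ℝ≥0∞) {r : ℝ} (hr : r ≠ 0) :
    ∫⁻ x, g (r • x) ∂μ = ENNReal.ofReal |(r ^ Module.finrank ℝ E)⁻¹| * ∫⁻ x, g x ∂μ := by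
  calc ∫⁻ x, g (r • x) ∂μ = ∫⁻ x, g x ∂(μ.map (r • ·)) :=
        (lintegral_map_equiv g (Homeomorph.smulOfNeZero r hr).toMeasurableEquiv).symm
    _ = _ := by rw [Measure.map_addHaar_smul μ hr, lintegral_smul_measure, smul_eq_mul]

lemma wnormSet_le_of_le_rpow_norm {d : ℕ} (hd : Module.finrank ℝ E = d) (hd0 : 0 < d)
    {α : ℝ} (hαd : α < d) {A : Set E} {g : E → ℝ≥0∞} {C : ℝ}
    (hg : ∀ x ∈ A, g x ≤ ENNReal.ofReal (C * ‖x‖ ^ (α - d))) :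
    wnormSet μ (d / (d - α)) A g ≤ ENNReal.ofReal C * μ (ball 0 1) ^ ((d - α) / d) := by
  have : Nontrivial E := Module.nontrivial_of_finrank_pos (hd ▸ hd0)
  have hdα : 0 < (d : ℝ) - α := sub_pos.2 hαd
  have he : 0 < ((d : ℝ) - α) / d := div_pos hdα (Nat.cast_pos.2 hd0)
  refine iSup_le fun l => ?_
  rcases eq_or_ne l 0 with rfl | hl
  · simp
  have hl' : (0 : ℝ) < l := NNReal.coe_pos.2 (pos_iff_ne_zero.2 hl)
  set R := (max C 0 / l) ^ ((d : ℝ) - α)⁻¹ with hR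
  have hlevel : {x | x ∈ A ∧ (l : ℝ≥0∞) < g x} ⊆ ball 0 R := by
    rintro x ⟨hxA, hlx⟩
    rw [← ENNReal.ofReal_coe_nnreal] at hlx
    have hlC := (ENNReal.ofReal_lt_ofReal_iff'.1 (hlx.trans_le (hg x hxA))).1
    rw [← neg_sub] at hlC
    exact mem_ball_zero_iff.2 (lt_rpow_inv_of_lt_mul_rpow_neg hl' (norm_nonneg x) hdα hlC)
  have hRd : ENNReal.ofReal (R ^ d) ^ (((d : ℝ) - α) / d) = ENNReal.ofReal (max C 0 / l) := by
    rw [ENNReal.ofReal_rpow_of_nonneg (by positivity) he.le, ← Real.rpow_natCast,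
      ← Real.rpow_mul (by positivity), hR, ← Real.rpow_mul (by positivity)]
    rw [show ((d : ℝ) - α)⁻¹ * (d * (((d : ℝ) - α) / d)) = 1 by field_simp, Real.rpow_one]
  calc (l : ℝ≥0∞) * μ {x | x ∈ A ∧ (l : ℝ≥0∞) < g x} ^ (1 / ((d : ℝ) / (d - α)))
      ≤ l * μ (ball 0 R) ^ (((d : ℝ) - α) / d) := by
        rw [one_div_div]; gcongr
    _ = l * ENNReal.ofReal (max C 0 / l) * μ (ball 0 1) ^ (((d : ℝ) - α) / d) := by
        rw [Measure.addHaar_ball _ _ (by positivity), hd,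
          ENNReal.mul_rpow_of_nonneg _ _ he.le, hRd, mul_assoc]
    _ = ENNReal.ofReal C * μ (ball 0 1) ^ (((d : ℝ) - α) / d) := by
        rw [ENNReal.ofReal_div_of_pos hl', ENNReal.ofReal_coe_nnreal,
          ENNReal.mul_div_cancel (by simpa using hl) ENNReal.coe_ne_top]
        simp

end HaarMeasure

namespace Homog

variable {n : ℕ} {Ω : Eucl n → ℝ}

lemma apply_normalize (hΩ : Homog n Ω) {x : Eucl n} (hx : x ≠ 0) : Ω (normalize x) = Ω x := by
  have := hΩ ‖x‖ (norm_pos_iff.2 hx) (normalize x) ((NormedSpace.normalize_eq_zero_iff x).not.2 hx)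
  rw [NormedSpace.norm_smul_normalize] at this
  exact this.symm

lemma abs_le (hΩ : Homog n Ω) {B : ℝ} (hB : ∀ u ∈ sphere (0 : Eucl n) 1, |Ω u| ≤ B)
    {x : Eucl n} (hx : x ≠ 0) : |Ω x| ≤ B := by
  simpa [hΩ.apply_normalize hx] using hB _ (normalize_mem_sphere hx)

lemma abs_sub_le (hΩ : Homog n Ω) {L : ℝ} (hL0 : 0 ≤ L)
    (hL : ∀ u ∈ sphere (0 : Eucl n) 1, ∀ v ∈ sphere (0 : Eucl n) 1, |Ω u - Ω v| ≤ L * ‖u - v‖)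
    {x y : Eucl n} (hx : x ≠ 0) (hy : y ≠ 0) : |Ω y - Ω x| ≤ 2 * L * ‖y - x‖ / ‖x‖ := by
  rw [← hΩ.apply_normalize hx, ← hΩ.apply_normalize hy]
  calc _ ≤ L * ‖normalize y - normalize x‖ :=
        hL _ (normalize_mem_sphere hy) _ (normalize_mem_sphere hx)
    _ ≤ L * (2 * ‖y - x‖ / ‖x‖) := by gcongr; exact norm_normalize_sub_normalize_le hx hy
    _ = 2 * L * ‖y - x‖ / ‖x‖ := by ring

end Homog

lemma support_dil_subset {n : ℕ} {t R : ℝ} (ht : 0 < t) {f : Eucl n → ℝ}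
    (hf : Function.support f ⊆ closedBall 0 R) :
    Function.support (dil n t f) ⊆ closedBall 0 (t * R) := by
  intro y hy
  have hfy : t⁻¹ • y ∈ closedBall 0 R := hf (right_ne_zero_of_mul hy)
  rw [mem_closedBall_zero_iff, norm_smul, norm_inv, Real.norm_of_nonneg ht.le,
    inv_mul_le_iff₀ ht] at hfy
  exact mem_closedBall_zero_iff.2 hfy

lemma lintegral_enorm_dil {n : ℕ} {t : ℝ} (ht : 0 < t) (f : Eucl n → ℝ) :
    ∫⁻ y, ‖dil n t f y‖ₑ = ∫⁻ y, ‖f y‖ₑ := by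
  simp only [dil, enorm_mul]
  rw [lintegral_const_mul' _ _ enorm_ne_top, lintegral_comp_smul volume (fun y => ‖f y‖ₑ)
    (inv_ne_zero ht.ne'), finrank_euclideanSpace_fin, ← mul_assoc, ← ofReal_norm,
    ← ENNReal.ofReal_mul (norm_nonneg _), ← Real.norm_eq_abs, ← norm_mul, inv_pow, inv_inv,
    inv_mul_cancel₀ (pow_pos ht n).ne', norm_one, ENNReal.ofReal_one, one_mul]

section FracMax

variable {n : ℕ} {α : ℝ} {Ω f : Eucl n → ℝ} {x : Eucl n} {t c : ℝ}

lemma fracMax_le (hαn : α ≤ n) (hf : Function.support f ⊆ closedBall 0 t)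
    (hmass : ∫⁻ y, ‖f y‖ₑ = 1) (htx : t < ‖x‖) (hΩ : ∀ y, ‖y‖ ≤ t → |Ω (x - y)| ≤ c) :
    fracMax n α Ω f x ≤ ENNReal.ofReal ((‖x‖ - t) ^ (α - n)) * ENNReal.ofReal c := by
  have hpt : ∀ y, (‖Ω (x - y)‖₊ * ‖f y‖₊ : ℝ≥0∞) ≤ ENNReal.ofReal c * ‖f y‖ₑ := by
    intro y
    rcases eq_or_ne (f y) 0 with hy | hy
    · simp [hy]
    rw [← enorm_eq_nnnorm, ← enorm_eq_nnnorm, Real.enorm_eq_ofReal_abs]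
    gcongr
    exact hΩ y (mem_closedBall_zero_iff.1 (hf hy))
  refine iSup₂_le fun r hr => ?_
  have hball : ∫⁻ y in ball x r, (‖Ω (x - y)‖₊ * ‖f y‖₊ : ℝ≥0∞)
      ≤ ENNReal.ofReal c * ∫⁻ y in ball x r, ‖f y‖ₑ := by
    rw [← lintegral_const_mul' _ _ ENNReal.ofReal_ne_top]
    exact lintegral_mono hpt
  rcases le_or_gt r (‖x‖ - t) with hrx | hrx
  · have hdisj : Disjoint (closedBall 0 t) (ball x r) :=
      closedBall_disjoint_ball (by rw [dist_zero_left]; linarith)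
    have hzero : ∫⁻ y in ball x r, ‖f y‖ₑ = 0 :=
      setLIntegral_eq_zero measurableSet_ball fun y hy => enorm_eq_zero.2 <|
        Function.notMem_support.1 fun hy' => Set.disjoint_left.1 hdisj (hf hy') hy
    rw [hzero, mul_zero, nonpos_iff_eq_zero] at hball
    simp [hball]
  · calc ENNReal.ofReal (r ^ (α - n)) * ∫⁻ y in ball x r, (‖Ω (x - y)‖₊ * ‖f y‖₊ : ℝ≥0∞)
        ≤ ENNReal.ofReal ((‖x‖ - t) ^ (α - n)) * (ENNReal.ofReal c * 1) := by
          refine mul_le_mul' (ENNReal.ofReal_le_ofReal ?_) (hball.trans ?_)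
          · exact Real.rpow_le_rpow_of_nonpos (sub_pos.2 htx) hrx.le (sub_nonpos.2 hαn)
          · gcongr
            exact hmass ▸ setLIntegral_le_lintegral _ _
      _ = _ := by rw [mul_one]

lemma ofReal_mul_le_fracMax (ht : 0 < t) (hf : Function.support f ⊆ closedBall 0 t)
    (hmass : ∫⁻ y, ‖f y‖ₑ = 1) (hΩ : ∀ y, ‖y‖ ≤ t → c ≤ |Ω (x - y)|) :
    ENNReal.ofReal ((‖x‖ + 2 * t) ^ (α - n)) * ENNReal.ofReal c ≤ fracMax n α Ω f x := by
  have hr : 0 < ‖x‖ + 2 * t := by positivity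
  refine le_trans ?_ (le_iSup₂_of_le (‖x‖ + 2 * t) hr le_rfl)
  have hsupp : Function.support (fun y => ‖f y‖ₑ) ⊆ ball x (‖x‖ + 2 * t) := by
    intro y hy
    have := mem_closedBall_zero_iff.1 (hf (enorm_ne_zero.1 hy))
    rw [mem_ball, dist_eq_norm]
    linarith [norm_sub_le y x]
  gcongr
  calc ENNReal.ofReal c = ∫⁻ y in ball x (‖x‖ + 2 * t), ENNReal.ofReal c * ‖f y‖ₑ := by
        rw [lintegral_const_mul' _ _ ENNReal.ofReal_ne_top,
          setLIntegral_eq_of_support_subset hsupp, hmass, mul_one]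
    _ ≤ _ := by
        refine lintegral_mono fun y => ?_
        rcases eq_or_ne (f y) 0 with hy | hy
        · simp [hy]
        rw [← enorm_eq_nnnorm, ← enorm_eq_nnnorm, Real.enorm_eq_ofReal_abs (Ω _)]
        gcongr ?_ * _
        exact ENNReal.ofReal_le_ofReal <| hΩ y (mem_closedBall_zero_iff.1 (hf hy))

end FracMax

lemma enorm_div_enorm_rpow {E : Type*} [NormedAddCommGroup E] {x : E} (hx : x ≠ 0) (c β : ℝ) :
    (‖c‖₊ : ℝ≥0∞) / (‖x‖₊ : ℝ≥0∞) ^ β = ENNReal.ofReal (|c| * ‖x‖ ^ (-β)) := by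
  have hx' : 0 < ‖x‖ := norm_pos_iff.2 hx
  rw [← enorm_eq_nnnorm, ← enorm_eq_nnnorm, Real.enorm_eq_ofReal_abs, ← ofReal_norm,
    ENNReal.ofReal_rpow_of_pos hx', ← ENNReal.ofReal_div_of_pos (Real.rpow_pos_of_pos hx' _),
    Real.rpow_neg hx'.le, div_eq_mul_inv]

section RadialFactor

variable {a r s t : ℝ}

lemma rpow_sub_le_mul_rpow (ha : a ≤ 0) (hr : 0 < r) (hs : s < 1) (hts : t ≤ s * r) :
    (r - t) ^ a ≤ (1 - s) ^ a * r ^ a := by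
  rw [← Real.mul_rpow (by linarith) hr.le]
  exact Real.rpow_le_rpow_of_nonpos (by nlinarith) (by nlinarith) ha

lemma mul_rpow_le_rpow_add (ha : a ≤ 0) (hr : 0 < r) (ht : 0 ≤ t) (hts : t ≤ s * r) :
    (1 + 2 * s) ^ a * r ^ a ≤ (r + 2 * t) ^ a := by
  have hs : 0 ≤ s := nonneg_of_mul_nonneg_left (ht.trans hts) hr
  rw [← Real.mul_rpow (by linarith) hr.le]
  exact Real.rpow_le_rpow_of_nonpos (by linarith) (by nlinarith) ha

end RadialFactor

/-- For `s = t / ρ` and `‖x‖ ≥ ρ`, the factors `(1 - s) ^ a` and `(1 + 2 * s) ^ a` compare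
`(‖x‖ - t) ^ a` and `(‖x‖ + 2 * t) ^ a` with `‖x‖ ^ a`, and `2 * L * s` bounds the oscillation of
`Ω` over `x - B(0, t)`. -/
def dilationError (B L a s : ℝ) : ℝ :=
  B * ((1 - s) ^ a - (1 + 2 * s) ^ a) + 2 * L * s * (1 - s) ^ a

lemma tendsto_dilationError (B L a : ℝ) : Tendsto (dilationError B L a) (𝓝 0) (𝓝 0) := by
  have : ContinuousAt (dilationError B L a) 0 := by
    unfold dilationError
    fun_prop (disch := norm_num)
  simpa [dilationError] using this.tendsto

section DilationError

variable {B L a s w : ℝ}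

lemma mul_add_le_add_dilationError (ha : a ≤ 0) (hs0 : 0 ≤ s) (hs1 : s < 1) (hw0 : 0 ≤ w)
    (hwB : w ≤ B) : (1 - s) ^ a * (w + 2 * L * s) ≤ w + dilationError B L a s := by
  have hp : 1 ≤ (1 - s) ^ a :=
    Real.one_le_rpow_of_pos_of_le_one_of_nonpos (by linarith) (by linarith) ha
  have hq : (1 + 2 * s) ^ a ≤ 1 := Real.rpow_le_one_of_one_le_of_nonpos (by linarith) ha
  unfold dilationError
  nlinarith [mul_le_mul_of_nonneg_right hwB (sub_nonneg.2 hp)]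

lemma sub_dilationError_le_mul_sub (ha : a ≤ 0) (hs0 : 0 ≤ s) (hs1 : s < 1) (hw0 : 0 ≤ w)
    (hwB : w ≤ B) (hL : 0 ≤ L) :
    w - dilationError B L a s ≤ (1 + 2 * s) ^ a * (w - 2 * L * s) := by
  have hp : 1 ≤ (1 - s) ^ a :=
    Real.one_le_rpow_of_pos_of_le_one_of_nonpos (by linarith) (by linarith) ha
  have hq : (1 + 2 * s) ^ a ≤ 1 := Real.rpow_le_one_of_one_le_of_nonpos (by linarith) ha
  unfold dilationError
  nlinarith [mul_le_mul_of_nonneg_right hwB (sub_nonneg.2 hq), mul_nonneg hL hs0]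

end DilationError

lemma Homog.abs_sub_le_of_norm_le {n : ℕ} {Ω : Eucl n → ℝ} (hΩ : Homog n Ω) {L : ℝ} (hL0 : 0 ≤ L)
    (hL : ∀ u ∈ sphere (0 : Eucl n) 1, ∀ v ∈ sphere (0 : Eucl n) 1, |Ω u - Ω v| ≤ L * ‖u - v‖)
    {ρ t : ℝ} (htρ : t < ρ) {x y : Eucl n} (hx : ρ ≤ ‖x‖) (hy : ‖y‖ ≤ t) :
    |Ω (x - y) - Ω x| ≤ 2 * L * (t / ρ) := by
  have hρ : 0 < ρ := (norm_nonneg y).trans_lt (hy.trans_lt htρ)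
  have hx0 : x ≠ 0 := norm_pos_iff.1 (hρ.trans_le hx)
  have hxy : x - y ≠ 0 := by
    rw [← norm_pos_iff]; linarith [norm_sub_norm_le x y]
  calc |Ω (x - y) - Ω x| ≤ 2 * L * ‖x - y - x‖ / ‖x‖ := hΩ.abs_sub_le hL0 hL hx0 hxy
    _ ≤ 2 * L * t / ρ := by
        rw [sub_sub_cancel_left, norm_neg]
        gcongr
        exact mul_nonneg (by positivity) ((norm_nonneg y).trans hy)
    _ = 2 * L * (t / ρ) := by ring

section FracMaxHomog

variable {n : ℕ} {α : ℝ} {Ω : Eucl n → ℝ} {B L : ℝ} {f : Eucl n → ℝ} {ρ t : ℝ} {x : Eucl n}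

lemma fracMax_le_of_homog (hαn : α ≤ n) (hΩ : Homog n Ω)
    (hB : ∀ u ∈ sphere (0 : Eucl n) 1, |Ω u| ≤ B) (hL0 : 0 ≤ L)
    (hL : ∀ u ∈ sphere (0 : Eucl n) 1, ∀ v ∈ sphere (0 : Eucl n) 1, |Ω u - Ω v| ≤ L * ‖u - v‖)
    (hf : Function.support f ⊆ closedBall 0 t) (hmass : ∫⁻ y, ‖f y‖ₑ = 1)
    (ht : 0 ≤ t) (htρ : t < ρ) (hx : ρ ≤ ‖x‖) :
    fracMax n α Ω f x
      ≤ ENNReal.ofReal ((|Ω x| + dilationError B L (α - n) (t / ρ)) * ‖x‖ ^ (α - n)) := by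
  have hρ : 0 < ρ := ht.trans_lt htρ
  have hr : 0 < ‖x‖ := hρ.trans_le hx
  have hts : t ≤ t / ρ * ‖x‖ := by
    rw [div_mul_comm]; exact le_mul_of_one_le_left ht ((one_le_div hρ).2 hx)
  have hΩx : ∀ y, ‖y‖ ≤ t → |Ω (x - y)| ≤ |Ω x| + 2 * L * (t / ρ) := fun y hy =>
    sub_le_iff_le_add'.1 <|
      (abs_sub_abs_le_abs_sub _ _).trans (hΩ.abs_sub_le_of_norm_le hL0 hL htρ hx hy)
  refine (fracMax_le hαn hf hmass (htρ.trans_le hx) hΩx).trans ?_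
  rw [← ENNReal.ofReal_mul (Real.rpow_nonneg (sub_pos.2 (htρ.trans_le hx)).le _)]
  refine ENNReal.ofReal_le_ofReal ?_
  calc (‖x‖ - t) ^ (α - n) * (|Ω x| + 2 * L * (t / ρ))
      ≤ (1 - t / ρ) ^ (α - n) * ‖x‖ ^ (α - n) * (|Ω x| + 2 * L * (t / ρ)) := by
        gcongr
        exact rpow_sub_le_mul_rpow (sub_nonpos.2 hαn) hr ((div_lt_one hρ).2 htρ) hts
    _ = (1 - t / ρ) ^ (α - n) * (|Ω x| + 2 * L * (t / ρ)) * ‖x‖ ^ (α - n) := by ring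
    _ ≤ (|Ω x| + dilationError B L (α - n) (t / ρ)) * ‖x‖ ^ (α - n) := by
        gcongr
        exact mul_add_le_add_dilationError (sub_nonpos.2 hαn) (by positivity)
          ((div_lt_one hρ).2 htρ) (abs_nonneg _) (hΩ.abs_le hB (norm_pos_iff.1 hr))

lemma ofReal_le_fracMax_of_homog (hαn : α ≤ n) (hΩ : Homog n Ω)
    (hB : ∀ u ∈ sphere (0 : Eucl n) 1, |Ω u| ≤ B) (hL0 : 0 ≤ L)
    (hL : ∀ u ∈ sphere (0 : Eucl n) 1, ∀ v ∈ sphere (0 : Eucl n) 1, |Ω u - Ω v| ≤ L * ‖u - v‖)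
    (hf : Function.support f ⊆ closedBall 0 t) (hmass : ∫⁻ y, ‖f y‖ₑ = 1)
    (ht : 0 < t) (htρ : t < ρ) (hx : ρ ≤ ‖x‖) :
    ENNReal.ofReal ((|Ω x| - dilationError B L (α - n) (t / ρ)) * ‖x‖ ^ (α - n))
      ≤ fracMax n α Ω f x := by
  have hρ : 0 < ρ := ht.trans htρ
  have hr : 0 < ‖x‖ := hρ.trans_le hx
  have hts : t ≤ t / ρ * ‖x‖ := by
    rw [div_mul_comm]; exact le_mul_of_one_le_left ht.le ((one_le_div hρ).2 hx)
  have hΩx : ∀ y, ‖y‖ ≤ t → |Ω x| - 2 * L * (t / ρ) ≤ |Ω (x - y)| := fun y hy =>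
    sub_le_comm.1 <| (abs_sub_abs_le_abs_sub _ _).trans <|
      abs_sub_comm (Ω x) _ ▸ hΩ.abs_sub_le_of_norm_le hL0 hL htρ hx hy
  refine le_trans ?_ (ofReal_mul_le_fracMax ht hf hmass hΩx)
  calc ENNReal.ofReal ((|Ω x| - dilationError B L (α - n) (t / ρ)) * ‖x‖ ^ (α - n))
      ≤ ENNReal.ofReal
          ((1 + 2 * (t / ρ)) ^ (α - n) * ‖x‖ ^ (α - n) * (|Ω x| - 2 * L * (t / ρ))) := by
        refine ENNReal.ofReal_le_ofReal ?_
        rw [mul_right_comm]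
        gcongr
        exact sub_dilationError_le_mul_sub (sub_nonpos.2 hαn) (by positivity)
          ((div_lt_one hρ).2 htρ) (abs_nonneg _) (hΩ.abs_le hB (norm_pos_iff.1 hr)) hL0
    _ ≤ ENNReal.ofReal ((‖x‖ + 2 * t) ^ (α - n)) * ENNReal.ofReal (|Ω x| - 2 * L * (t / ρ)) := by
        rw [ENNReal.ofReal_mul (by positivity)]
        gcongr
        exact mul_rpow_le_rpow_add (sub_nonpos.2 hαn) hr ht.le hts

end FracMaxHomog

lemma ediff_fracMax_dil_le {n : ℕ} {α : ℝ} (hαn : α ≤ n) {Ω : Eucl n → ℝ} (hΩ : Homog n Ω)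
    {B L : ℝ} (hB : ∀ u ∈ sphere (0 : Eucl n) 1, |Ω u| ≤ B) (hL0 : 0 ≤ L)
    (hL : ∀ u ∈ sphere (0 : Eucl n) 1, ∀ v ∈ sphere (0 : Eucl n) 1, |Ω u - Ω v| ≤ L * ‖u - v‖)
    {f : Eucl n → ℝ} (hf : Function.support f ⊆ closedBall 0 1) (hmass : ∫⁻ y, ‖f y‖ₑ = 1)
    {ρ t : ℝ} (ht : 0 < t) (htρ : t < ρ) {x : Eucl n} (hx : ρ ≤ ‖x‖) :
    ediff (fracMax n α Ω (dil n t f) x) ((‖Ω x‖₊ : ℝ≥0∞) / (‖x‖₊ : ℝ≥0∞) ^ ((n : ℝ) - α))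
      ≤ ENNReal.ofReal (dilationError B L (α - n) (t / ρ) * ‖x‖ ^ (α - n)) := by
  have hsupp : Function.support (dil n t f) ⊆ closedBall 0 t := by
    simpa using support_dil_subset ht hf
  have hmass' : ∫⁻ y, ‖dil n t f y‖ₑ = 1 := (lintegral_enorm_dil ht f).trans hmass
  rw [enorm_div_enorm_rpow (norm_pos_iff.1 ((ht.trans htρ).trans_le hx)), neg_sub]
  refine ediff_le_ofReal ?_ ?_
  · simpa only [add_mul] using
      fracMax_le_of_homog hαn hΩ hB hL0 hL hsupp hmass' ht.le htρ hx
  · simpa only [sub_mul] using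
      ofReal_le_fracMax_of_homog hαn hΩ hB hL0 hL hsupp hmass' ht htρ hx

theorem stmt14_general (n : ℕ) (α : ℝ) (hα : 0 < α) (hαn : α < n)
    (Ω : Eucl n → ℝ) (B L : ℝ) (hhom : Homog n Ω)
    (hB : ∀ u ∈ sphere (0 : Eucl n) 1, |Ω u| ≤ B)
    (hL : ∀ u ∈ sphere (0 : Eucl n) 1, ∀ v ∈ sphere (0 : Eucl n) 1,
      |Ω u - Ω v| ≤ L * ‖u - v‖)
    (f : Eucl n → ℝ) (hf : Integrable f) (hpos : ∀ y, 0 ≤ f y)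
    (hsupp : Function.support f ⊆ closedBall (0 : Eucl n) 1)
    (hnorm : (∫ y, f y) = 1) :
    ∀ ρ > (0:ℝ),
      Tendsto (fun t : ℝ => wnormSet volume ((n:ℝ)/((n:ℝ)-α)) ((ball (0 : Eucl n) ρ)ᶜ)
          (fun x => ediff (fracMax n α Ω (dil n t f) x)
            ((‖Ω x‖₊ : ℝ≥0∞) / (‖x‖₊ : ℝ≥0∞) ^ ((n:ℝ) - α))))
        (nhdsWithin 0 (Ioi 0)) (nhds 0) := by
  intro ρ hρ
  have hn : 0 < n := by exact_mod_cast hα.trans hαn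
  have hL' : ∀ u ∈ sphere (0 : Eucl n) 1, ∀ v ∈ sphere (0 : Eucl n) 1,
      |Ω u - Ω v| ≤ max L 0 * ‖u - v‖ := fun u hu v hv =>
    (hL u hu v hv).trans (by gcongr; exact le_max_left L 0)
  have hmass : ∫⁻ y, ‖f y‖ₑ = 1 := by
    rw [← ofReal_integral_norm_eq_lintegral_enorm hf]
    simp [Real.norm_of_nonneg (hpos _), hnorm]
  have hbound : Tendsto (fun t => ENNReal.ofReal (dilationError B (max L 0) (α - n) (t / ρ))
      * volume (ball (0 : Eucl n) 1) ^ (((n : ℝ) - α) / n)) (𝓝[>] 0) (𝓝 0) := by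
    have h := (tendsto_dilationError B (max L 0) (α - n)).comp
      ((continuous_id.div_const ρ).tendsto' 0 0 (zero_div ρ))
    simpa using (ENNReal.Tendsto.mul_const (ENNReal.tendsto_ofReal h)
      (.inr (ENNReal.rpow_ne_top_of_nonneg (by positivity) measure_ball_lt_top.ne))).mono_left
      nhdsWithin_le_nhds
  refine tendsto_of_tendsto_of_tendsto_of_le_of_le' tendsto_const_nhds hbound
    (.of_forall fun _ => zero_le) ?_
  filter_upwards [Ioo_mem_nhdsGT hρ] with t ht
  exact wnormSet_le_of_le_rpow_norm volume finrank_euclideanSpace_fin hn hαn fun x hx =>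
    ediff_fracMax_dil_le hαn.le hhom hB (le_max_right L 0) hL' hsupp hmass ht.1 ht.2
      (by simpa using hx)

theorem stmt14 (n : ℕ) (α : ℝ) (hα : 0 < α) (hαn : α < n)
    (Ω : Eucl n → ℝ) (B L : ℝ) (hmeas : Measurable Ω) (hhom : Homog n Ω)
    (hB : ∀ u ∈ sphere (0 : Eucl n) 1, |Ω u| ≤ B)
    (hL : ∀ u ∈ sphere (0 : Eucl n) 1, ∀ v ∈ sphere (0 : Eucl n) 1,
      |Ω u - Ω v| ≤ L * ‖u - v‖)
    (f : Eucl n → ℝ) (hf : Integrable f) (hpos : ∀ y, 0 ≤ f y)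
    (hsupp : Function.support f ⊆ closedBall (0 : Eucl n) 1)
    (hnorm : (∫ y, f y) = 1) :
    ∀ ρ > (0:ℝ),
      Tendsto (fun t : ℝ => wnormSet volume ((n:ℝ)/((n:ℝ)-α)) ((ball (0 : Eucl n) ρ)ᶜ)
          (fun x => ediff (fracMax n α Ω (dil n t f) x)
            ((‖Ω x‖₊ : ℝ≥0∞) / (‖x‖₊ : ℝ≥0∞) ^ ((n:ℝ) - α))))
        (nhdsWithin 0 (Ioi 0)) (nhds 0) :=
  stmt14_general n α hα hαn Ω B L hhom hB hL f hf hpos hsupp hnorm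

end
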